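/- arXiv:1202.5098 — 3 statements merged into one kernel-verified Lean document; each statement's English description precedes it below -/
import Mathlib

section
/- If X has continuous distribution function F and K is a distribution function on (0,1), then the random variable F(X') where X' has distribution function K∘F has distribution function K on (0,1). Equivalently, if Y has distribution function G = K∘F, then F(Y) has distribution function K. -/
open MeasureTheory Set Filter

/-- If `F` is a continuous distribution function and `Y` has distribution
function `K ∘ F`, where `K` is a distribution function concentrated on `[0,1]`,
then `F(Y)` has distribution function `K` on `(0,1)`. -/
theorem cdf_of_F_of_Y
    {Ω : Type*} [MeasurableSpace Ω] (ℙ : Measure Ω) [IsProbabilityMeasure ℙ]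
    (Y : Ω → ℝ) (hY : Measurable Y)
    (F K : ℝ → ℝ)
    (hFmono : Monotone F) (hFcont : Continuous F)
    (hFbot : Tendsto F atBot (nhds 0)) (hFtop : Tendsto F atTop (nhds 1))
    (hKmono : Monotone K)
    (hK0 : ∀ v ≤ (0 : ℝ), K v = 0) (hK1 : ∀ v, (1 : ℝ) ≤ v → K v = 1)
    (hcdfY : ∀ x, (ℙ {ω | Y ω ≤ x}).toReal = K (F x)) :
    ∀ u ∈ Ioo (0 : ℝ) 1, (ℙ {ω | F (Y ω) ≤ u}).toReal = K u := by
  intro u hu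
  obtain ⟨hu0, hu1⟩ := hu
  -- find a with F a < u
  obtain ⟨a, ha⟩ : ∃ a, F a < u := by
    have : ∀ᶠ x in atBot, F x < u := hFbot.eventually_lt_const hu0
    exact this.exists
  -- find b with u < F b
  obtain ⟨b, hb⟩ : ∃ b, u < F b := by
    have : ∀ᶠ x in atTop, u < F x := hFtop.eventually_const_lt hu1
    exact this.exists
  -- IVT: get x with F x = u
  have hab : a ≤ b := by
    by_contra h
    exact absurd (hFmono (le_of_not_ge h)) (not_le.mpr (ha.trans hb))
  obtain ⟨x, -, hx⟩ : ∃ x ∈ Icc a b, F x = u := by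
    have := intermediate_value_Icc hab hFcont.continuousOn
    exact this ⟨ha.le, hb.le⟩
  set S : Set ℝ := {x | F x ≤ u} with hS
  have hxS : x ∈ S := le_of_eq hx
  have hbdd : BddAbove S := by
    refine ⟨b, fun y hy => ?_⟩
    by_contra h
    exact absurd ((hFmono (le_of_not_ge h)).trans hy) (not_le.mpr hb)
  set x₀ : ℝ := sSup S with hx₀
  have hSclosed : IsClosed S := isClosed_le hFcont continuous_const
  have hx₀S : x₀ ∈ S := hSclosed.csSup_mem ⟨x, hxS⟩ hbdd
  have hFx₀ : F x₀ = u := le_antisymm hx₀S (hx ▸ hFmono (le_csSup hbdd hxS))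
  have hset : {ω | F (Y ω) ≤ u} = {ω | Y ω ≤ x₀} := by
    ext ω
    constructor
    · intro h
      exact le_csSup hbdd h
    · intro h
      exact (hFmono h).trans hx₀S
  rw [hset, hcdfY x₀, hFx₀]
end

section
/- For every continuous distribution function F and distribution function K on (0,1), the joint distribution of the ranks of Y_1,...,Y_n in the combined sample under the alternative (F, K∘F) equals the joint distribution of the ranks under the alternative (U, K), where U is the uniform distribution on (0,1). In particular the distribution of any rank statistic T = Σ k(R_j) under (F, K∘F) does not depend on F. -/
open MeasureTheory Set Filter

/-- The rank of the `i`-th coordinate among `x 0, ..., x (N-1)`. -/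
noncomputable def rank {N : ℕ} (x : Fin N → ℝ) (i : Fin N) : ℕ :=
  (Finset.univ.filter fun j => x j ≤ x i).card

/-! Transforming the sample by `F` turns the alternative `(F, K ∘ F)` into `(U, K)`: by the
probability integral transform, `F(X_i)` is uniform and `F(Y_j)` has distribution function `K`,
so the transformed sample has the same joint law as the sample under `(U, K)`. Since `F` is
monotone, the transformation preserves ranks as long as it creates no ties, and ties have
probability zero because the transformed observations are independent with continuous
distribution functions. -/

lemma measurable_rank {N : ℕ} (i : Fin N) : Measurable fun x : Fin N → ℝ => rank x i := by
  simp only [rank, Finset.card_filter]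
  exact Finset.measurable_sum _ fun j _ =>
    Measurable.ite (measurableSet_le (measurable_pi_apply j) (measurable_pi_apply i))
      measurable_const measurable_const

lemma rank_comp_of_monotone {N : ℕ} {f : ℝ → ℝ} (hf : Monotone f) {x : Fin N → ℝ}
    (hinj : Function.Injective fun i => f (x i)) (i : Fin N) :
    rank (fun i => f (x i)) i = rank x i := by
  refine congrArg Finset.card (Finset.filter_congr fun j _ => ⟨fun h => ?_, fun h => hf h⟩)
  by_contra hlt
  exact (not_le.1 hlt).ne' (congrArg x (hinj (le_antisymm h (hf (not_le.1 hlt).le))))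

lemma measure_rank_eq_of_map_eq {N : ℕ} {Ω Ω' : Type*} [MeasurableSpace Ω] [MeasurableSpace Ω']
    {μ : Measure Ω} {ν : Measure Ω'} {X : Fin N → Ω → ℝ} {Y : Fin N → Ω' → ℝ}
    (hX : ∀ i, Measurable (X i)) (hY : ∀ i, Measurable (Y i))
    (hlaw : μ.map (fun ω i => X i ω) = ν.map (fun ω i => Y i ω)) (Φ : (Fin N → ℕ) → Prop) :
    μ {ω | Φ (rank fun i => X i ω)} = ν {ω | Φ (rank fun i => Y i ω)} := by
  have hS : MeasurableSet {x : Fin N → ℝ | Φ (rank x)} :=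
    measurable_pi_lambda _ measurable_rank MeasurableSet.of_discrete
  have h := congrArg (fun ρ => ρ {x | Φ (rank x)}) hlaw
  rwa [Measure.map_apply (measurable_pi_lambda _ hX) hS,
    Measure.map_apply (measurable_pi_lambda _ hY) hS] at h

lemma Monotone.exists_preimage_Iic_eq_Iic {F : ℝ → ℝ} (hmono : Monotone F) (hcont : Continuous F)
    {x : ℝ} (hne : ∃ s, F s ≤ x) (hbdd : ∃ T, x < F T) :
    ∃ c, F c = x ∧ F ⁻¹' Iic x = Iic c := by
  obtain ⟨T, hT⟩ := hbdd
  set S := F ⁻¹' Iic x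
  have hSbdd : BddAbove S := ⟨T, fun t ht => (hmono.reflect_lt (lt_of_le_of_lt ht hT)).le⟩
  have hcS : sSup S ∈ S := (isClosed_Iic.preimage hcont).csSup_mem hne hSbdd
  refine ⟨sSup S, le_antisymm hcS (not_lt.1 fun hlt => ?_),
    Subset.antisymm (fun t ht => le_csSup hSbdd ht) fun t ht => (hmono ht).trans hcS⟩
  obtain ⟨t, -, hFt⟩ := intermediate_value_Icc (hmono.reflect_lt (hlt.trans hT)).le
    hcont.continuousOn ⟨hlt.le, hT.le⟩
  exact hlt.not_ge (hFt ▸ hmono (le_csSup hSbdd hFt.le))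

section IntegralTransform

variable {Ω : Type*} [MeasurableSpace Ω] {μ : Measure Ω} [IsProbabilityMeasure μ] {F G : ℝ → ℝ}

lemma measure_comp_le_eq_ofReal (hmono : Monotone F) (hcont : Continuous F)
    (hFbot : Tendsto F atBot (nhds 0)) (hFtop : Tendsto F atTop (nhds 1))
    (hG0 : ∀ v ≤ (0 : ℝ), G v = 0) (hG1 : ∀ v, (1 : ℝ) ≤ v → G v = 1) {A : Ω → ℝ}
    (hA : ∀ t, μ {ω | A ω ≤ t} = ENNReal.ofReal (G (F t))) (x : ℝ) :
    μ {ω | F (A ω) ≤ x} = ENNReal.ofReal (G x) := by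
  rcases le_or_gt 1 x with hx1 | hx1
  · have huniv : {ω | F (A ω) ≤ x} = univ :=
      eq_univ_of_forall fun ω => (hmono.ge_of_tendsto hFtop _).trans hx1
    rw [huniv, measure_univ, hG1 x hx1, ENNReal.ofReal_one]
  by_cases hne : ∃ s, F s ≤ x
  · obtain ⟨c, hFc, hpre⟩ := hmono.exists_preimage_Iic_eq_Iic hcont hne
      (hFtop.eventually (eventually_gt_nhds hx1)).exists
    have hset : {ω | F (A ω) ≤ x} = {ω | A ω ≤ c} := congrArg (A ⁻¹' ·) hpre
    rw [hset, hA c, hFc]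
  · simp only [not_exists, not_le] at hne
    have hx0 : x ≤ 0 := not_lt.1 fun hx0 =>
      let ⟨s, hs⟩ := (hFbot.eventually (eventually_lt_nhds hx0)).exists
      (hne s).not_gt hs
    have hempty : {ω | F (A ω) ≤ x} = ∅ :=
      eq_empty_of_forall_notMem fun ω h => (hne _).not_ge h
    rw [hempty, measure_empty, hG0 x hx0, ENNReal.ofReal_zero]

lemma map_comp_eq_map_of_cdf {Ω' : Type*} [MeasurableSpace Ω'] {ν : Measure Ω'}
    (hmono : Monotone F) (hcont : Continuous F)
    (hFbot : Tendsto F atBot (nhds 0)) (hFtop : Tendsto F atTop (nhds 1))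
    (hG0 : ∀ v ≤ (0 : ℝ), G v = 0) (hG1 : ∀ v, (1 : ℝ) ≤ v → G v = 1)
    {A : Ω → ℝ} {B : Ω' → ℝ} (hAmeas : Measurable A) (hBmeas : Measurable B)
    (hA : ∀ t, μ {ω | A ω ≤ t} = ENNReal.ofReal (G (F t)))
    (hB : ∀ x, ν {ω | B ω ≤ x} = ENNReal.ofReal (G x)) :
    μ.map (fun ω => F (A ω)) = ν.map B := by
  refine Measure.ext_of_Iic _ _ fun x => ?_
  rw [Measure.map_apply (f := fun ω => F (A ω)) (hcont.measurable.comp hAmeas) measurableSet_Iic,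
    Measure.map_apply hBmeas measurableSet_Iic]
  exact (measure_comp_le_eq_ofReal hmono hcont hFbot hFtop hG0 hG1 hA x).trans (hB x).symm

end IntegralTransform

namespace ProbabilityTheory

lemma nullSingletonClass_of_continuous_cdf (μ : Measure ℝ) [IsProbabilityMeasure μ]
    (hcont : Continuous (cdf μ)) : NullSingletonClass μ := by
  refine ⟨fun a => ?_⟩
  rw [← measure_cdf μ, StieltjesFunction.measure_singleton,
    leftLim_eq_of_tendsto hcont.continuousWithinAt.tendsto, sub_self, ENNReal.ofReal_zero]

lemma continuous_cdf_of_measure_Iic (μ : Measure ℝ) [IsProbabilityMeasure μ] {G : ℝ → ℝ}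
    (hG : Continuous G) (h : ∀ x, μ (Iic x) = ENNReal.ofReal (G x)) : Continuous (cdf μ) := by
  have hcdf : ⇑(cdf μ) = fun x => max (G x) 0 := by
    funext x
    rw [cdf_eq_real, measureReal_def, h, ENNReal.toReal_ofReal']
  rw [hcdf]
  fun_prop

lemma nullSingletonClass_map_of_cdf {Ω : Type*} [MeasurableSpace Ω] {μ : Measure Ω}
    [IsProbabilityMeasure μ] {B : Ω → ℝ} (hB : Measurable B) {G : ℝ → ℝ} (hG : Continuous G)
    (h : ∀ x, μ {ω | B ω ≤ x} = ENNReal.ofReal (G x)) : NullSingletonClass (μ.map B) := by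
  have := Measure.isProbabilityMeasure_map (μ := μ) hB.aemeasurable
  refine nullSingletonClass_of_continuous_cdf _ (continuous_cdf_of_measure_Iic _ hG fun x => ?_)
  rw [Measure.map_apply hB measurableSet_Iic]
  exact h x

lemma IndepFun.measure_eq_eq_zero {Ω β : Type*} [MeasurableSpace Ω] [MeasurableSpace β]
    [MeasurableEq β] {μ : Measure Ω} [IsFiniteMeasure μ] {A B : Ω → β}
    (hA : Measurable A) (hB : Measurable B) (hind : IndepFun A B μ)
    [NullSingletonClass (μ.map B)] : μ {ω | A ω = B ω} = 0 := by
  have hdiag : {ω | A ω = B ω} = (fun ω => (A ω, B ω)) ⁻¹' diagonal β := rfl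
  rw [hdiag, ← Measure.map_apply (hA.prodMk hB) measurableSet_diagonal,
    (indepFun_iff_map_prod_eq_prod_map_map hA.aemeasurable hB.aemeasurable).1 hind,
    Measure.prod_apply measurableSet_diagonal]
  simp [preimage, diagonal]

lemma iIndepFun.ae_injective {ι Ω β : Type*} [Countable ι] [MeasurableSpace Ω]
    [MeasurableSpace β] [MeasurableEq β] {μ : Measure Ω} [IsProbabilityMeasure μ]
    {X : ι → Ω → β} (hX : ∀ i, Measurable (X i)) (hind : iIndepFun X μ)
    (hatoms : ∀ i, NullSingletonClass (μ.map (X i))) :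
    ∀ᵐ ω ∂μ, Function.Injective fun i => X i ω := by
  simp only [Function.Injective, ae_all_iff]
  intro i j
  by_cases hij : i = j
  · exact ae_of_all _ fun _ _ => hij
  · filter_upwards [measure_eq_zero_iff_ae_notMem.1
      ((hind.indepFun hij).measure_eq_eq_zero (hX i) (hX j))] with ω hω h
    exact absurd h hω

lemma iIndepFun.map_fun_eq_of_map_eq {ι Ω Ω' β : Type*} [Fintype ι] [MeasurableSpace Ω]
    [MeasurableSpace Ω'] [MeasurableSpace β] {μ : Measure Ω} {ν : Measure Ω'}
    {X : ι → Ω → β} {Y : ι → Ω' → β} (hXind : iIndepFun X μ) (hYind : iIndepFun Y ν)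
    (hX : ∀ i, Measurable (X i)) (hY : ∀ i, Measurable (Y i))
    (hlaw : ∀ i, μ.map (X i) = ν.map (Y i)) :
    μ.map (fun ω i => X i ω) = ν.map (fun ω i => Y i ω) := by
  rw [hXind.map_fun_eq_pi_map (fun i => (hX i).aemeasurable),
    hYind.map_fun_eq_pi_map (fun i => (hY i).aemeasurable)]
  simp only [hlaw]

end ProbabilityTheory

theorem rank_distribution_lehmann_alternative_general
    {Ω Ω' : Type*} [MeasurableSpace Ω] [MeasurableSpace Ω']
    (ℙ : Measure Ω) [IsProbabilityMeasure ℙ]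
    (ℙ' : Measure Ω') [IsProbabilityMeasure ℙ']
    (m n : ℕ)
    (F K : ℝ → ℝ)
    (hFmono : Monotone F) (hFcont : Continuous F)
    (hFbot : Tendsto F atBot (nhds 0)) (hFtop : Tendsto F atTop (nhds 1))
    (hKcont : Continuous K)
    (hK0 : ∀ v ≤ (0 : ℝ), K v = 0) (hK1 : ∀ v, (1 : ℝ) ≤ v → K v = 1)
    -- the sample under the alternative (F, K ∘ F)
    (Z : Fin (m + n) → Ω → ℝ) (hZmeas : ∀ i, Measurable (Z i))
    (hZindep : ProbabilityTheory.iIndepFun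
      (m := fun _ : Fin (m + n) => (inferInstance : MeasurableSpace ℝ)) Z ℙ)
    (hZX : ∀ i : Fin m, ∀ x,
      ℙ {ω | Z (Fin.castAdd n i) ω ≤ x} = ENNReal.ofReal (F x))
    (hZY : ∀ j : Fin n, ∀ x,
      ℙ {ω | Z (Fin.natAdd m j) ω ≤ x} = ENNReal.ofReal (K (F x)))
    -- the sample under the alternative (U, K)
    (W : Fin (m + n) → Ω' → ℝ) (hWmeas : ∀ i, Measurable (W i))
    (hWindep : ProbabilityTheory.iIndepFun
      (m := fun _ : Fin (m + n) => (inferInstance : MeasurableSpace ℝ)) W ℙ')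
    (hWX : ∀ i : Fin m, ∀ x,
      ℙ' {ω | W (Fin.castAdd n i) ω ≤ x} = ENNReal.ofReal (max 0 (min x 1)))
    (hWY : ∀ j : Fin n, ∀ x,
      ℙ' {ω | W (Fin.natAdd m j) ω ≤ x} = ENNReal.ofReal (K x))
    (k : ℕ → ℝ) :
    (∀ r : Fin n → ℕ,
      ℙ {ω | ∀ j : Fin n, rank (fun i => Z i ω) (Fin.natAdd m j) = r j}
        = ℙ' {ω | ∀ j : Fin n, rank (fun i => W i ω) (Fin.natAdd m j) = r j}) ∧
    (∀ t : ℝ,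
      ℙ {ω | t ≤ ∑ j : Fin n, k (rank (fun i => Z i ω) (Fin.natAdd m j))}
        = ℙ' {ω | t ≤ ∑ j : Fin n, k (rank (fun i => W i ω) (Fin.natAdd m j))}) := by
  set V : Fin (m + n) → Ω → ℝ := fun i ω => F (Z i ω)
  have hVmeas : ∀ i, Measurable (V i) := fun i => hFcont.measurable.comp (hZmeas i)
  have hZXclamp : ∀ i t, ℙ {ω | Z (Fin.castAdd n i) ω ≤ t} = ENNReal.ofReal (max 0 (min (F t) 1)) :=
    fun i t => by rw [hZX i, min_eq_left (hFmono.ge_of_tendsto hFtop t),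
      max_eq_right (hFmono.le_of_tendsto hFbot t)]
  have hlaw : ∀ i, ℙ.map (V i) = ℙ'.map (W i) := Fin.addCases
    (fun i => map_comp_eq_map_of_cdf hFmono hFcont hFbot hFtop (fun v hv => by simp [hv])
      (fun v hv => by simp [hv]) (hZmeas _) (hWmeas _) (hZXclamp i) (hWX i))
    (fun j => map_comp_eq_map_of_cdf hFmono hFcont hFbot hFtop hK0 hK1 (hZmeas _) (hWmeas _)
      (hZY j) (hWY j))
  have hatoms : ∀ i, NullSingletonClass (ℙ.map (V i)) := fun i => by
    rw [hlaw i]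
    exact Fin.addCases (motive := fun i => NullSingletonClass (ℙ'.map (W i)))
      (fun i => ProbabilityTheory.nullSingletonClass_map_of_cdf (hWmeas _) (by fun_prop) (hWX i))
      (fun j => ProbabilityTheory.nullSingletonClass_map_of_cdf (hWmeas _) hKcont (hWY j)) i
  have hVindep := hZindep.comp (fun _ => F) fun _ => hFcont.measurable
  have hinj : ∀ᵐ ω ∂ℙ, Function.Injective fun i => V i ω := hVindep.ae_injective hVmeas hatoms
  have hrank : ∀ Φ : (Fin (m + n) → ℕ) → Prop,
      ℙ {ω | Φ (rank fun i => Z i ω)} = ℙ' {ω | Φ (rank fun i => W i ω)} := fun Φ =>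
    calc ℙ {ω | Φ (rank fun i => Z i ω)} = ℙ {ω | Φ (rank fun i => V i ω)} :=
          measure_congr <| eventuallyEq_set.2 <| hinj.mono fun ω h =>
            (congrArg Φ (funext (rank_comp_of_monotone hFmono h)).symm).to_iff
      _ = ℙ' {ω | Φ (rank fun i => W i ω)} := measure_rank_eq_of_map_eq hVmeas hWmeas
          (hVindep.map_fun_eq_of_map_eq hWindep hVmeas hWmeas hlaw) Φ
  exact ⟨fun r => hrank fun R => ∀ j, R (Fin.natAdd m j) = r j,
    fun t => hrank fun R => t ≤ ∑ j, k (R (Fin.natAdd m j))⟩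

/-- For every continuous distribution function `F` and continuous distribution
function `K` on `(0,1)`, the joint distribution of the ranks of the `Y`-sample
in the combined sample under the alternative `(F, K ∘ F)` equals the joint
distribution of the ranks under `(U, K)`, where `U` is the uniform distribution
on `(0,1)`.  In particular, the distribution of any rank statistic
`T = Σ_j k(R_j)` under `(F, K ∘ F)` does not depend on `F`. -/
theorem rank_distribution_lehmann_alternative
    {Ω Ω' : Type*} [MeasurableSpace Ω] [MeasurableSpace Ω']
    (ℙ : Measure Ω) [IsProbabilityMeasure ℙ]
    (ℙ' : Measure Ω') [IsProbabilityMeasure ℙ']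
    (m n : ℕ)
    (F K : ℝ → ℝ)
    (hFmono : Monotone F) (hFcont : Continuous F)
    (hFbot : Tendsto F atBot (nhds 0)) (hFtop : Tendsto F atTop (nhds 1))
    (hKmono : Monotone K) (hKcont : Continuous K)
    (hK0 : ∀ v ≤ (0 : ℝ), K v = 0) (hK1 : ∀ v, (1 : ℝ) ≤ v → K v = 1)
    -- the sample under the alternative (F, K ∘ F)
    (Z : Fin (m + n) → Ω → ℝ) (hZmeas : ∀ i, Measurable (Z i))
    (hZindep : ProbabilityTheory.iIndepFun
      (m := fun _ : Fin (m + n) => (inferInstance : MeasurableSpace ℝ)) Z ℙ)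
    (hZX : ∀ i : Fin m, ∀ x,
      ℙ {ω | Z (Fin.castAdd n i) ω ≤ x} = ENNReal.ofReal (F x))
    (hZY : ∀ j : Fin n, ∀ x,
      ℙ {ω | Z (Fin.natAdd m j) ω ≤ x} = ENNReal.ofReal (K (F x)))
    -- the sample under the alternative (U, K)
    (W : Fin (m + n) → Ω' → ℝ) (hWmeas : ∀ i, Measurable (W i))
    (hWindep : ProbabilityTheory.iIndepFun
      (m := fun _ : Fin (m + n) => (inferInstance : MeasurableSpace ℝ)) W ℙ')
    (hWX : ∀ i : Fin m, ∀ x,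
      ℙ' {ω | W (Fin.castAdd n i) ω ≤ x} = ENNReal.ofReal (max 0 (min x 1)))
    (hWY : ∀ j : Fin n, ∀ x,
      ℙ' {ω | W (Fin.natAdd m j) ω ≤ x} = ENNReal.ofReal (K x))
    (k : ℕ → ℝ) :
    (∀ r : Fin n → ℕ,
      ℙ {ω | ∀ j : Fin n, rank (fun i => Z i ω) (Fin.natAdd m j) = r j}
        = ℙ' {ω | ∀ j : Fin n, rank (fun i => W i ω) (Fin.natAdd m j) = r j}) ∧
    (∀ t : ℝ,
      ℙ {ω | t ≤ ∑ j : Fin n, k (rank (fun i => Z i ω) (Fin.natAdd m j))}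
        = ℙ' {ω | t ≤ ∑ j : Fin n, k (rank (fun i => W i ω) (Fin.natAdd m j))}) :=
  rank_distribution_lehmann_alternative_general ℙ ℙ' m n F K hFmono hFcont hFbot hFtop hKcont hK0
    hK1 Z hZmeas hZindep hZX hZY W hWmeas hWindep hWX hWY k
end

section
/- Suppose the powers of two tests admit expansions π_{n,A}(c) = a_0(c) + a_1(c) n^{-1/2} + o(n^{-1/2}) and π_{n,B}(c) = b_0(c) + b_1(c) n^{-1/2} + o(n^{-1/2}), with a_0 = b_0 continuously differentiable with a_0'(c) > 0, and k_n is a sequence with π_{n,A}(c) = π_{k_n,B}(c (k_n/n)^{1/2}) and k_n/n → 1. Then the deficiency d_n = k_n − n satisfies d_n / n^{1/2} → 2(a_1(c) − b_1(c))/(c · a_0'(c)). -/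
/-!
Subtracting the two expansions and using the matching condition gives
`√n (a₀(c √(kₙ/n)) - a₀(c)) → a₁(c) - b₁(c)`. Since `a₀'(c) ≠ 0`, increments of `a₀` near `c`
are asymptotically equivalent to `a₀'(c)` times the increments of the argument, so
`√n (c √(kₙ/n) - c) → (a₁(c) - b₁(c)) / a₀'(c)`. Finally
`(kₙ - n) / √n = √n (√(kₙ/n) - 1) (√(kₙ/n) + 1)`, and the last factor tends to `2`.
-/

open Filter Asymptotics Real Topology

theorem HasDerivAt.tendsto_mul_sub_of_tendsto_mul_sub {𝕜 ι : Type*} [NontriviallyNormedField 𝕜]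
    {f : 𝕜 → 𝕜} {f' x₀ L : 𝕜} (hf : HasDerivAt f f' x₀) (hf' : f' ≠ 0) {l : Filter ι}
    {x r : ι → 𝕜} (hx : Tendsto x l (𝓝 x₀))
    (h : Tendsto (fun i ↦ r i * (f (x i) - f x₀)) l (𝓝 L)) :
    Tendsto (fun i ↦ r i * (x i - x₀)) l (𝓝 (L / f')) := by
  have hpair : Tendsto (fun i ↦ (x i, x₀)) l (𝓝 x₀ ×ˢ pure x₀) :=
    hx.prodMk (tendsto_pure.2 (Eventually.of_forall fun _ ↦ rfl))
  have hequiv : (fun i ↦ f (x i) - f x₀) ~[l] fun i ↦ (x i - x₀) • f' :=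
    (HasDerivAtFilter.isEquivalent_sub hf hf').comp_tendsto hpair
  have hlin := ((IsEquivalent.refl (u := r)).mul hequiv).tendsto_nhds h
  refine (hlin.div_const f').congr fun i ↦ ?_
  simp only [Pi.mul_apply, smul_eq_mul]
  field_simp

theorem tendsto_mul_of_sub_isLittleO_one_div {α 𝕜 : Type*} [NormedField 𝕜] {l : Filter α}
    {s p e : α → 𝕜} {β : 𝕜} (h : (fun x ↦ p x - e x) =o[l] fun x ↦ 1 / s x)
    (he : Tendsto (fun x ↦ s x * e x) l (𝓝 β)) :
    Tendsto (fun x ↦ s x * p x) l (𝓝 β) := by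
  have hrem : Tendsto (fun x ↦ s x * (p x - e x)) l (𝓝 0) := by
    refine h.tendsto_div_nhds_zero.congr fun x ↦ ?_
    rw [div_div_eq_mul_div, div_one, mul_comm]
  have hsum := hrem.add he
  rw [zero_add] at hsum
  exact hsum.congr fun x ↦ by ring

theorem sub_div_sqrt_eq (x : ℝ) {y : ℝ} (hy : 0 ≤ y) :
    (y - x) / √x = √x * (√(y / x) - 1) * (√(y / x) + 1) := by
  rcases le_or_gt x 0 with hx | hx
  · simp [sqrt_eq_zero'.2 hx]
  have hsq : √(y / x) ^ 2 = y / x := sq_sqrt (by positivity)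
  calc (y - x) / √x = √x * (y / x - 1) := by
        rw [div_eq_iff (sqrt_pos.2 hx).ne', mul_right_comm, mul_self_sqrt hx.le]
        field_simp
    _ = √x * (√(y / x) - 1) * (√(y / x) + 1) := by linear_combination (-√x) * hsq

theorem deficiency_limit_general
    (a0 a1 b0 b1 : ℝ → ℝ) (c : ℝ) (hc : 0 < c)
    (hab : a0 = b0)
    (a0' : ℝ) (hderiv : HasDerivAt a0 a0' c) (ha0' : 0 < a0')
    (hb1cont : ContinuousAt b1 c)
    (πA πB : ℕ → ℝ → ℝ)
    (hA : (fun n : ℕ => πA n c - a0 c - a1 c / Real.sqrt n)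
      =o[atTop] fun n : ℕ => 1 / Real.sqrt n)
    (k : ℕ → ℕ)
    (hkn : Tendsto (fun n : ℕ => (k n : ℝ) / n) atTop (nhds 1))
    (hB : (fun n : ℕ => πB (k n) (c * Real.sqrt ((k n : ℝ) / n))
        - b0 (c * Real.sqrt ((k n : ℝ) / n))
        - b1 (c * Real.sqrt ((k n : ℝ) / n)) / Real.sqrt (k n))
      =o[atTop] fun n : ℕ => 1 / Real.sqrt n)
    (hmatch : ∀ n : ℕ, πA n c = πB (k n) (c * Real.sqrt ((k n : ℝ) / n))) :
    Tendsto (fun n : ℕ => ((k n : ℝ) - n) / Real.sqrt n) atTop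
      (nhds (2 * (a1 c - b1 c) / (c * a0'))) := by
  subst hab
  set u : ℕ → ℝ := fun n ↦ √((k n : ℝ) / n) with hu_def
  have hu : Tendsto u atTop (𝓝 1) := by
    rw [← sqrt_one]
    exact (continuous_sqrt.tendsto 1).comp hkn
  have ht : Tendsto (fun n ↦ c * u n) atTop (𝓝 c) := by simpa using hu.const_mul c
  have hA' : Tendsto (fun n : ℕ ↦ √n * (πA n c - a0 c)) atTop (𝓝 (a1 c)) := by
    refine tendsto_mul_of_sub_isLittleO_one_div hA (tendsto_const_nhds.congr' ?_)
    filter_upwards [eventually_gt_atTop 0] with n hn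
    field_simp
  have hB' : Tendsto (fun n : ℕ ↦ √n * (πB (k n) (c * u n) - a0 (c * u n))) atTop
      (𝓝 (b1 c)) := by
    refine tendsto_mul_of_sub_isLittleO_one_div hB ?_
    have hlim := (hb1cont.tendsto.comp ht).div hu one_ne_zero
    rw [div_one] at hlim
    refine hlim.congr fun n ↦ ?_
    simp only [Pi.div_apply, Function.comp_apply, hu_def]
    rw [sqrt_div (Nat.cast_nonneg _), div_div_eq_mul_div]
    ring
  have hF : Tendsto (fun n : ℕ ↦ √n * (a0 (c * u n) - a0 c)) atTop (𝓝 (a1 c - b1 c)) :=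
    (hA'.sub hB').congr fun n ↦ by rw [hmatch n]; ring
  have hscaled := hderiv.tendsto_mul_sub_of_tendsto_mul_sub ha0'.ne' ht hF
  convert (hscaled.div_const c).mul (hu.add_const 1) using 2 with n
  · rw [sub_div_sqrt_eq _ (Nat.cast_nonneg _)]
    change √n * (u n - 1) * (u n + 1) = _
    field_simp
  · field_simp
    ring

/-- Deficiency (Hodges–Lehmann): if the powers of tests `A` and `B` admit the
expansions `π_{n,A}(c) = a₀(c) + a₁(c) n^{-1/2} + o(n^{-1/2})` and
`π_{n,B}(c) = b₀(c) + b₁(c) n^{-1/2} + o(n^{-1/2})` with `a₀ = b₀`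
differentiable at `c` with positive derivative, and `k_n` matches the powers,
`π_{n,A}(c) = π_{k_n,B}(c (k_n/n)^{1/2})`, with `k_n/n → 1`, then the
deficiency `d_n = k_n − n` satisfies
`d_n / n^{1/2} → 2 (a₁(c) − b₁(c)) / (c a₀'(c))`. -/
theorem deficiency_limit
    (a0 a1 b0 b1 : ℝ → ℝ) (c : ℝ) (hc : 0 < c)
    (hab : a0 = b0)
    (a0' : ℝ) (hderiv : HasDerivAt a0 a0' c) (ha0' : 0 < a0')
    (ha1cont : ContinuousAt a1 c) (hb1cont : ContinuousAt b1 c)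
    (πA πB : ℕ → ℝ → ℝ)
    (hA : (fun n : ℕ => πA n c - a0 c - a1 c / Real.sqrt n)
      =o[atTop] fun n : ℕ => 1 / Real.sqrt n)
    (k : ℕ → ℕ) (hkpos : ∀ n, 0 < k n)
    (hkn : Tendsto (fun n : ℕ => (k n : ℝ) / n) atTop (nhds 1))
    (hB : (fun n : ℕ => πB (k n) (c * Real.sqrt ((k n : ℝ) / n))
        - b0 (c * Real.sqrt ((k n : ℝ) / n))
        - b1 (c * Real.sqrt ((k n : ℝ) / n)) / Real.sqrt (k n))
      =o[atTop] fun n : ℕ => 1 / Real.sqrt n)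
    (hmatch : ∀ n : ℕ, πA n c = πB (k n) (c * Real.sqrt ((k n : ℝ) / n))) :
    Tendsto (fun n : ℕ => ((k n : ℝ) - n) / Real.sqrt n) atTop
      (nhds (2 * (a1 c - b1 c) / (c * a0'))) :=
  deficiency_limit_general a0 a1 b0 b1 c hc hab a0' hderiv ha0' hb1cont πA πB hA k hkn hB hmatch
end
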